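/- arXiv:2104.07187 — 16 statements merged into one kernel-verified Lean document; each statement's English description precedes it below -/
import Mathlib

section
/- Let R be a commutative ring with nonzero identity, δ an expansion function of the ideals of R, and I a proper ideal of R. Then the following are equivalent: (1) I is a δ-J-ideal of R; (2) for every a ∈ R and every ideal K of R with aK ⊆ I, either a ∈ J(R) or K ⊆ δ(I); (3) for all ideals K and L of R with KL ⊆ I, either K ⊆ J(R) or L ⊆ δ(I). -/
/-- A proper ideal `I` is a `δ`-`J`-ideal if whenever `a * b ∈ I`,
then `a ∈ J(R)` or `b ∈ δ I`. -/
def IsDeltaJIdeal {R : Type*} [CommRing R] (δ : Ideal R → Ideal R) (I : Ideal R) : Prop :=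
  I ≠ ⊤ ∧ ∀ a b : R, a * b ∈ I → a ∈ (⊥ : Ideal R).jacobson ∨ b ∈ δ I

section

variable {R : Type*} [CommRing R] {δ : Ideal R → Ideal R} {I : Ideal R}

theorem IsDeltaJIdeal.mem_jacobson_or_le_of_span_singleton_mul_le (h : IsDeltaJIdeal δ I)
    {a : R} {K : Ideal R} (hK : Ideal.span {a} * K ≤ I) :
    a ∈ (⊥ : Ideal R).jacobson ∨ K ≤ δ I :=
  or_iff_not_imp_left.mpr fun ha _ hb =>
    (h.2 a _ (Ideal.span_singleton_mul_le_iff.mp hK _ hb)).resolve_left ha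

theorem le_jacobson_or_le_of_mul_le
    (h : ∀ (a : R) (K : Ideal R), Ideal.span {a} * K ≤ I →
      a ∈ (⊥ : Ideal R).jacobson ∨ K ≤ δ I)
    {K L : Ideal R} (hKL : K * L ≤ I) : K ≤ (⊥ : Ideal R).jacobson ∨ L ≤ δ I := by
  refine or_iff_not_imp_left.mpr fun hK => ?_
  obtain ⟨a, haK, haJ⟩ := Set.not_subset.mp hK
  have haL : Ideal.span {a} * L ≤ I :=
    (Ideal.mul_mono_left ((Ideal.span_singleton_le_iff_mem K).mpr haK)).trans hKL
  exact (h a L haL).resolve_left haJ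

theorem isDeltaJIdeal_of_mul_le (hI : I ≠ ⊤)
    (h : ∀ K L : Ideal R, K * L ≤ I → K ≤ (⊥ : Ideal R).jacobson ∨ L ≤ δ I) :
    IsDeltaJIdeal δ I := by
  refine ⟨hI, fun a b hab => ?_⟩
  have hspan : Ideal.span {a} * Ideal.span {b} ≤ I := by
    rwa [Ideal.span_singleton_mul_span_singleton, Ideal.span_singleton_le_iff_mem]
  exact (h _ _ hspan).imp (· (Ideal.mem_span_singleton_self a))
    (· (Ideal.mem_span_singleton_self b))

end

theorem deltaJ_tfae_general {R : Type*} [CommRing R]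
    (δ : Ideal R → Ideal R)
    (I : Ideal R) (hI : I ≠ ⊤) :
    List.TFAE
      [ IsDeltaJIdeal δ I,
        ∀ (a : R) (K : Ideal R), Ideal.span {a} * K ≤ I →
          a ∈ (⊥ : Ideal R).jacobson ∨ K ≤ δ I,
        ∀ K L : Ideal R, K * L ≤ I →
          K ≤ (⊥ : Ideal R).jacobson ∨ L ≤ δ I ] := by
  tfae_have 1 → 2 := fun h _ _ => h.mem_jacobson_or_le_of_span_singleton_mul_le
  tfae_have 2 → 3 := fun h _ _ => le_jacobson_or_le_of_mul_le h
  tfae_have 3 → 1 := isDeltaJIdeal_of_mul_le hI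
  tfae_finish

theorem deltaJ_tfae {R : Type*} [CommRing R] [Nontrivial R]
    (δ : Ideal R → Ideal R)
    (hexp : ∀ I : Ideal R, I ≤ δ I)
    (hmono : ∀ I J : Ideal R, I ≤ J → δ I ≤ δ J)
    (I : Ideal R) (hI : I ≠ ⊤) :
    List.TFAE
      [ IsDeltaJIdeal δ I,
        ∀ (a : R) (K : Ideal R), Ideal.span {a} * K ≤ I →
          a ∈ (⊥ : Ideal R).jacobson ∨ K ≤ δ I,
        ∀ K L : Ideal R, K * L ≤ I →
          K ≤ (⊥ : Ideal R).jacobson ∨ L ≤ δ I ] :=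
  deltaJ_tfae_general δ I hI
end

section
/- Let R be a commutative ring with nonzero identity, δ an expansion function of the ideals of R, and I a proper ideal of R with δ(I) ≠ R. Then I is a δ-J-ideal of R if and only if I ⊆ J(R) and whenever a, b ∈ R with ab ∈ I, either a lies in the Jacobson radical of I (the intersection of all maximal ideals of R containing I) or b ∈ δ(I). -/
theorem Ideal.jacobson_eq_jacobson_bot_of_le {R : Type*} [Ring R] {I : Ideal R}
    (h : I ≤ (⊥ : Ideal R).jacobson) : I.jacobson = (⊥ : Ideal R).jacobson :=
  le_antisymm ((Ideal.jacobson_mono h).trans_eq Ideal.jacobson_idem) (Ideal.jacobson_mono bot_le)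

theorem IsDeltaJIdeal.le_jacobson_bot {R : Type*} [CommRing R] {δ : Ideal R → Ideal R}
    {I : Ideal R} (h : IsDeltaJIdeal δ I) (hδI : δ I ≠ ⊤) : I ≤ (⊥ : Ideal R).jacobson :=
  fun a ha => (h.2 a 1 (by rwa [mul_one])).resolve_right fun h1 =>
    hδI ((Ideal.eq_top_iff_one _).2 h1)

theorem deltaJ_iff_subset_jacobson_general {R : Type*} [CommRing R]
    (δ : Ideal R → Ideal R)
    (I : Ideal R) (hI : I ≠ ⊤) (hδI : δ I ≠ ⊤) :
    IsDeltaJIdeal δ I ↔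
      (I ≤ (⊥ : Ideal R).jacobson ∧
        ∀ a b : R, a * b ∈ I → a ∈ I.jacobson ∨ b ∈ δ I) := by
  constructor
  · intro h
    exact ⟨h.le_jacobson_bot hδI,
      fun a b hab => (h.2 a b hab).imp_left fun ha => Ideal.jacobson_mono bot_le ha⟩
  · rintro ⟨hle, h⟩
    rw [Ideal.jacobson_eq_jacobson_bot_of_le hle] at h
    exact ⟨hI, h⟩

theorem deltaJ_iff_subset_jacobson {R : Type*} [CommRing R] [Nontrivial R]
    (δ : Ideal R → Ideal R)
    (hexp : ∀ I : Ideal R, I ≤ δ I)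
    (hmono : ∀ I J : Ideal R, I ≤ J → δ I ≤ δ J)
    (I : Ideal R) (hI : I ≠ ⊤) (hδI : δ I ≠ ⊤) :
    IsDeltaJIdeal δ I ↔
      (I ≤ (⊥ : Ideal R).jacobson ∧
        ∀ a b : R, a * b ∈ I → a ∈ I.jacobson ∨ b ∈ δ I) :=
  deltaJ_iff_subset_jacobson_general δ I hI hδI
end

section
/- Let R be a commutative ring with nonzero identity and δ an expansion function of the ideals of R such that δ(I) ≠ R for every proper ideal I of R. Then the following are equivalent: (1) R is a quasi-local (local) ring, i.e., R has a unique maximal ideal, which then equals J(R); (2) every proper principal ideal of R is a δ-J-ideal of R; (3) every proper ideal of R is a δ-J-ideal of R. -/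
section

variable {R : Type*} [CommRing R]

theorem IsDeltaJIdeal.of_isLocalRing [IsLocalRing R] {δ : Ideal R → Ideal R} {I : Ideal R}
    (hI : I ≠ ⊤) (hexp : I ≤ δ I) : IsDeltaJIdeal δ I := by
  refine ⟨hI, fun a b hab => ?_⟩
  by_cases ha : IsUnit a
  · right
    obtain ⟨u, rfl⟩ := ha
    have hb : b = ↑u⁻¹ * (↑u * b) := by rw [Units.inv_mul_cancel_left]
    exact hexp (hb ▸ I.mul_mem_left _ hab)
  · left
    rw [IsLocalRing.jacobson_eq_maximalIdeal ⊥ bot_ne_top]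
    exact ha

theorem IsDeltaJIdeal.mem_jacobson_bot_of_span_singleton {δ : Ideal R → Ideal R} {a : R}
    (h : IsDeltaJIdeal δ (Ideal.span {a})) (hδ : δ (Ideal.span {a}) ≠ ⊤) :
    a ∈ (⊥ : Ideal R).jacobson := by
  have ha : a * 1 ∈ Ideal.span {a} := by simp [Ideal.mem_span_singleton_self a]
  exact (h.2 a 1 ha).resolve_right fun h1 => hδ ((Ideal.eq_top_iff_one _).2 h1)

theorem IsLocalRing.of_nonunits_le_jacobson_bot [Nontrivial R]
    (h : ∀ a : R, ¬IsUnit a → a ∈ (⊥ : Ideal R).jacobson) : IsLocalRing R := by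
  refine IsLocalRing.of_isUnit_or_isUnit_one_sub_self fun a => or_iff_not_imp_left.2 fun ha => ?_
  simpa [sub_eq_neg_add] using Ideal.mem_jacobson_bot.1 (h a ha) (-1)

end

theorem local_iff_every_ideal_deltaJ_general {R : Type*} [CommRing R] [Nontrivial R]
    (δ : Ideal R → Ideal R)
    (hexp : ∀ I : Ideal R, I ≤ δ I)
    (hproper : ∀ I : Ideal R, I ≠ ⊤ → δ I ≠ ⊤) :
    List.TFAE
      [ IsLocalRing R,
        ∀ x : R, Ideal.span {x} ≠ ⊤ → IsDeltaJIdeal δ (Ideal.span {x}),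
        ∀ I : Ideal R, I ≠ ⊤ → IsDeltaJIdeal δ I ] := by
  tfae_have 1 → 3 := fun _ I hI => .of_isLocalRing hI (hexp I)
  tfae_have 3 → 2 := fun h x hx => h _ hx
  tfae_have 2 → 1 := fun h => IsLocalRing.of_nonunits_le_jacobson_bot fun a ha =>
    have hspan : Ideal.span {a} ≠ ⊤ := by rwa [Ne, Ideal.span_singleton_eq_top]
    (h a hspan).mem_jacobson_bot_of_span_singleton (hproper _ hspan)
  tfae_finish

theorem local_iff_every_ideal_deltaJ {R : Type*} [CommRing R] [Nontrivial R]
    (δ : Ideal R → Ideal R)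
    (hexp : ∀ I : Ideal R, I ≤ δ I)
    (hmono : ∀ I J : Ideal R, I ≤ J → δ I ≤ δ J)
    (hproper : ∀ I : Ideal R, I ≠ ⊤ → δ I ≠ ⊤) :
    List.TFAE
      [ IsLocalRing R,
        ∀ x : R, Ideal.span {x} ≠ ⊤ → IsDeltaJIdeal δ (Ideal.span {x}),
        ∀ I : Ideal R, I ≠ ⊤ → IsDeltaJIdeal δ I ] :=
  local_iff_every_ideal_deltaJ_general δ hexp hproper
end

section
/- Let R be a commutative ring with nonzero identity, δ an expansion function of the ideals of R, and I a δ-primary ideal of R with δ(I) ≠ R. Then I is a δ-J-ideal of R if and only if I ⊆ J(R). -/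
/-- A proper ideal `I` is `δ`-primary if whenever `a * b ∈ I` and `a ∉ I`, then `b ∈ δ I`. -/
def IsDeltaPrimary {R : Type*} [CommRing R] (δ : Ideal R → Ideal R) (I : Ideal R) : Prop :=
  I ≠ ⊤ ∧ ∀ a b : R, a * b ∈ I → a ∉ I → b ∈ δ I

section

variable {R : Type*} [CommRing R] {δ : Ideal R → Ideal R} {I : Ideal R}

theorem IsDeltaJIdeal.le_jacobson (hJ : IsDeltaJIdeal δ I) (hδI : δ I ≠ ⊤) :
    I ≤ (⊥ : Ideal R).jacobson := by
  intro a ha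
  have hone : (1 : R) ∉ δ I := fun h => hδI ((Ideal.eq_top_iff_one _).2 h)
  exact (hJ.2 a 1 (by rwa [mul_one])).resolve_right hone

theorem IsDeltaPrimary.isDeltaJIdeal_of_le_jacobson (hprim : IsDeltaPrimary δ I)
    (hI : I ≤ (⊥ : Ideal R).jacobson) : IsDeltaJIdeal δ I := by
  refine ⟨hprim.1, fun a b hab => ?_⟩
  by_cases haI : a ∈ I
  · exact Or.inl (hI haI)
  · exact Or.inr (hprim.2 a b hab haI)

end

theorem deltaPrimary_deltaJ_iff_general {R : Type*} [CommRing R]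
    (δ : Ideal R → Ideal R)
    (I : Ideal R) (hprim : IsDeltaPrimary δ I) (hδI : δ I ≠ ⊤) :
    IsDeltaJIdeal δ I ↔ I ≤ (⊥ : Ideal R).jacobson :=
  ⟨fun hJ => hJ.le_jacobson hδI, hprim.isDeltaJIdeal_of_le_jacobson⟩

theorem deltaPrimary_deltaJ_iff {R : Type*} [CommRing R] [Nontrivial R]
    (δ : Ideal R → Ideal R)
    (hexp : ∀ I : Ideal R, I ≤ δ I)
    (hmono : ∀ I J : Ideal R, I ≤ J → δ I ≤ δ J)
    (I : Ideal R) (hprim : IsDeltaPrimary δ I) (hδI : δ I ≠ ⊤) :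
    IsDeltaJIdeal δ I ↔ I ≤ (⊥ : Ideal R).jacobson :=
  deltaPrimary_deltaJ_iff_general δ I hprim hδI
end

section
/- Let R be a commutative ring with nonzero identity, δ an expansion function of the ideals of R, and I a δ-J-ideal of R. If x ∈ R is such that (δ(I) : x) ⊆ δ((I : x)) and δ((I : x)) ≠ R, then the ideal quotient (I : x) is a δ-J-ideal of R. -/
theorem colon_deltaJ_general {R : Type*} [CommRing R]
    (δ : Ideal R → Ideal R)
    (hexp : ∀ I : Ideal R, I ≤ δ I)
    (I : Ideal R) (hI : IsDeltaJIdeal δ I) (x : R)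
    (hcolon : (δ I).colon (Ideal.span {x}) ≤ δ (I.colon (Ideal.span {x})))
    (hproper : δ (I.colon (Ideal.span {x})) ≠ ⊤) :
    IsDeltaJIdeal δ (I.colon (Ideal.span {x})) := by
  refine ⟨ne_top_of_le_ne_top hproper (hexp _), fun a b hab => ?_⟩
  have habx : a * (b * x) ∈ I := by
    rw [← mul_assoc]
    exact Ideal.mem_colon_span_singleton.mp hab
  exact (hI.2 a (b * x) habx).imp id fun h => hcolon (Ideal.mem_colon_span_singleton.mpr h)

theorem colon_deltaJ {R : Type*} [CommRing R] [Nontrivial R]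
    (δ : Ideal R → Ideal R)
    (hexp : ∀ I : Ideal R, I ≤ δ I)
    (hmono : ∀ I J : Ideal R, I ≤ J → δ I ≤ δ J)
    (I : Ideal R) (hI : IsDeltaJIdeal δ I) (x : R)
    (hcolon : (δ I).colon (Ideal.span {x}) ≤ δ (I.colon (Ideal.span {x})))
    (hproper : δ (I.colon (Ideal.span {x})) ≠ ⊤) :
    IsDeltaJIdeal δ (I.colon (Ideal.span {x})) :=
  colon_deltaJ_general δ hexp I hI x hcolon hproper
end

section
/- Let R be a commutative ring with nonzero identity and δ an expansion function of the ideals of R. Suppose I is a maximal element (with respect to inclusion) of the set of δ-J-ideals of R, that δ(I) ≠ R, and that for every x ∈ R with x ∉ J(R) one has (δ(I) : x) ⊆ δ((I : x)) and δ((I : x)) ≠ R. Then I is a J-ideal of R. -/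
/-- A proper ideal `I` is a `J`-ideal if whenever `a * b ∈ I`,
then `a ∈ J(R)` or `b ∈ I`. -/
def IsJIdeal {R : Type*} [CommRing R] (I : Ideal R) : Prop :=
  I ≠ ⊤ ∧ ∀ a b : R, a * b ∈ I → a ∈ (⊥ : Ideal R).jacobson ∨ b ∈ I

section

variable {R : Type*} [CommRing R]

theorem IsDeltaJIdeal.colon_span_singleton {δ : Ideal R → Ideal R} (hexp : ∀ I, I ≤ δ I)
    {I : Ideal R} (hI : IsDeltaJIdeal δ I) {x : R}
    (hsub : (δ I).colon (Ideal.span {x}) ≤ δ (I.colon (Ideal.span {x})))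
    (hne : δ (I.colon (Ideal.span {x})) ≠ ⊤) :
    IsDeltaJIdeal δ (I.colon (Ideal.span {x})) := by
  refine ⟨ne_top_of_le_ne_top hne (hexp _), fun a b hab => ?_⟩
  rw [Ideal.mem_colon_span_singleton, mul_assoc] at hab
  exact (hI.2 a (b * x) hab).imp_right fun h => hsub (Ideal.mem_colon_span_singleton.mpr h)

theorem IsJIdeal.of_forall_colon_eq {I : Ideal R} (hI : I ≠ ⊤)
    (hcolon : ∀ x ∉ (⊥ : Ideal R).jacobson, I.colon (Ideal.span {x}) = I) : IsJIdeal I := by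
  refine ⟨hI, fun a b hab => or_iff_not_imp_left.mpr fun ha => ?_⟩
  rw [← hcolon a ha, Ideal.mem_colon_span_singleton, mul_comm]
  exact hab

end

theorem maximal_deltaJ_isJIdeal_general {R : Type*} [CommRing R]
    (δ : Ideal R → Ideal R)
    (hexp : ∀ I : Ideal R, I ≤ δ I)
    (I : Ideal R)
    (hI : IsDeltaJIdeal δ I)
    (hmaxelt : ∀ I' : Ideal R, IsDeltaJIdeal δ I' → I ≤ I' → I = I')
    (hcolon : ∀ x : R, x ∉ (⊥ : Ideal R).jacobson →
      (δ I).colon (Ideal.span {x}) ≤ δ (I.colon (Ideal.span {x})) ∧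
        δ (I.colon (Ideal.span {x})) ≠ ⊤) :
    IsJIdeal I := by
  refine IsJIdeal.of_forall_colon_eq hI.1 fun x hx => ?_
  obtain ⟨hsub, hne⟩ := hcolon x hx
  exact (hmaxelt _ (hI.colon_span_singleton hexp hsub hne) Ideal.le_colon).symm

theorem maximal_deltaJ_isJIdeal {R : Type*} [CommRing R] [Nontrivial R]
    (δ : Ideal R → Ideal R)
    (hexp : ∀ I : Ideal R, I ≤ δ I)
    (hmono : ∀ I J : Ideal R, I ≤ J → δ I ≤ δ J)
    (I : Ideal R)
    (hI : IsDeltaJIdeal δ I)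
    (hmaxelt : ∀ I' : Ideal R, IsDeltaJIdeal δ I' → I ≤ I' → I = I')
    (hδI : δ I ≠ ⊤)
    (hcolon : ∀ x : R, x ∉ (⊥ : Ideal R).jacobson →
      (δ I).colon (Ideal.span {x}) ≤ δ (I.colon (Ideal.span {x})) ∧
        δ (I.colon (Ideal.span {x})) ≠ ⊤) :
    IsJIdeal I :=
  maximal_deltaJ_isJIdeal_general δ hexp I hI hmaxelt hcolon
end

section
/- Let R be a nonzero commutative ring with identity and δ an expansion function of the ideals of R such that δ(I) ≠ R for every proper ideal I of R, and such that (δ(J(R)) : x) ⊆ δ((J(R) : x)) for every x ∈ R with x ∉ J(R). Then the following are equivalent: (1) J(R) is a J-ideal of R; (2) J(R) is a δ-J-ideal of R; (3) J(R) is a prime ideal of R. -/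
namespace Ideal

variable {R : Type*} [CommRing R]

/-- An element `x ∈ δ I \ I` would give `1 ∈ (δ I : x) ≤ δ (I : x)` with `(I : x)` proper. -/
theorem expansion_eq_self_of_colon_le {δ : Ideal R → Ideal R} {I : Ideal R} (hexp : I ≤ δ I)
    (hproper : ∀ J : Ideal R, J ≠ ⊤ → δ J ≠ ⊤)
    (hcolon : ∀ x ∉ I, (δ I).colon (span {x}) ≤ δ (I.colon (span {x}))) :
    δ I = I := by
  refine le_antisymm (fun x hx => ?_) hexp
  by_contra hxI
  have hone : (1 : R) ∈ δ (I.colon (span {x})) :=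
    hcolon x hxI (by rwa [mem_colon_span_singleton, one_mul])
  have hcolon_top : I.colon (span {x}) = ⊤ := by
    by_contra hne
    exact hproper _ hne (eq_top_of_isUnit_mem _ hone isUnit_one)
  rw [colon_span, Submodule.colon_eq_top_iff_subset, Set.singleton_subset_iff] at hcolon_top
  exact hxI hcolon_top

theorem isDeltaJIdeal_iff_isJIdeal {δ : Ideal R → Ideal R} {I : Ideal R} (hδ : δ I = I) :
    IsDeltaJIdeal δ I ↔ IsJIdeal I := by
  rw [IsDeltaJIdeal, IsJIdeal, hδ]

theorem isJIdeal_jacobson_bot_iff_isPrime :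
    IsJIdeal (⊥ : Ideal R).jacobson ↔ (⊥ : Ideal R).jacobson.IsPrime :=
  ⟨fun ⟨hne, hmem⟩ => ⟨hne, fun {a b} hab => hmem a b hab⟩,
    fun hprime => ⟨hprime.ne_top, fun _ _ hab => hprime.mem_or_mem hab⟩⟩

end Ideal

theorem jacobson_tfae_general {R : Type*} [CommRing R]
    (δ : Ideal R → Ideal R)
    (hexp : ∀ I : Ideal R, I ≤ δ I)
    (hproper : ∀ I : Ideal R, I ≠ ⊤ → δ I ≠ ⊤)
    (hcolon : ∀ x : R, x ∉ (⊥ : Ideal R).jacobson →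
      (δ ((⊥ : Ideal R).jacobson)).colon (Ideal.span {x}) ≤
        δ (((⊥ : Ideal R).jacobson).colon (Ideal.span {x}))) :
    List.TFAE
      [ IsJIdeal ((⊥ : Ideal R).jacobson),
        IsDeltaJIdeal δ ((⊥ : Ideal R).jacobson),
        ((⊥ : Ideal R).jacobson).IsPrime ] := by
  have hfix : δ (⊥ : Ideal R).jacobson = (⊥ : Ideal R).jacobson :=
    Ideal.expansion_eq_self_of_colon_le (hexp _) hproper hcolon
  tfae_have 1 ↔ 2 := (Ideal.isDeltaJIdeal_iff_isJIdeal hfix).symm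
  tfae_have 1 ↔ 3 := Ideal.isJIdeal_jacobson_bot_iff_isPrime
  tfae_finish

theorem jacobson_tfae {R : Type*} [CommRing R] [Nontrivial R]
    (δ : Ideal R → Ideal R)
    (hexp : ∀ I : Ideal R, I ≤ δ I)
    (hmono : ∀ I J : Ideal R, I ≤ J → δ I ≤ δ J)
    (hproper : ∀ I : Ideal R, I ≠ ⊤ → δ I ≠ ⊤)
    (hcolon : ∀ x : R, x ∉ (⊥ : Ideal R).jacobson →
      (δ ((⊥ : Ideal R).jacobson)).colon (Ideal.span {x}) ≤
        δ (((⊥ : Ideal R).jacobson).colon (Ideal.span {x}))) :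
    List.TFAE
      [ IsJIdeal ((⊥ : Ideal R).jacobson),
        IsDeltaJIdeal δ ((⊥ : Ideal R).jacobson),
        ((⊥ : Ideal R).jacobson).IsPrime ] :=
  jacobson_tfae_general δ hexp hproper hcolon
end

section
/- Let R be a commutative ring with nonzero identity, δ an expansion function of the ideals of R, and I a proper ideal of R with δ(δ(I)) = δ(I). If I is a δ-J-ideal of R and a ∈ R with a ∉ J(R), then δ((I : a)) = δ(I). -/
theorem IsDeltaJIdeal.colon_span_singleton_le {R : Type*} [CommRing R]
    {δ : Ideal R → Ideal R} {I : Ideal R} (hJ : IsDeltaJIdeal δ I) {a : R}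
    (ha : a ∉ (⊥ : Ideal R).jacobson) : I.colon (Ideal.span {a}) ≤ δ I := by
  intro x hx
  have hax : a * x ∈ I := mul_comm x a ▸ Ideal.mem_colon_span_singleton.mp hx
  exact (hJ.2 a x hax).resolve_left ha

theorem delta_colon_eq_general {R : Type*} [CommRing R]
    (δ : Ideal R → Ideal R)
    (hmono : ∀ I J : Ideal R, I ≤ J → δ I ≤ δ J)
    (I : Ideal R) (hidem : δ (δ I) = δ I)
    (hJ : IsDeltaJIdeal δ I) (a : R) (ha : a ∉ (⊥ : Ideal R).jacobson) :
    δ (I.colon (Ideal.span {a})) = δ I := by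
  refine le_antisymm ?_ (hmono _ _ Ideal.le_colon)
  calc δ (I.colon (Ideal.span {a})) ≤ δ (δ I) := hmono _ _ (hJ.colon_span_singleton_le ha)
    _ = δ I := hidem

theorem delta_colon_eq {R : Type*} [CommRing R] [Nontrivial R]
    (δ : Ideal R → Ideal R)
    (hexp : ∀ I : Ideal R, I ≤ δ I)
    (hmono : ∀ I J : Ideal R, I ≤ J → δ I ≤ δ J)
    (I : Ideal R) (hI : I ≠ ⊤) (hidem : δ (δ I) = δ I)
    (hJ : IsDeltaJIdeal δ I) (a : R) (ha : a ∉ (⊥ : Ideal R).jacobson) :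
    δ (I.colon (Ideal.span {a})) = δ I :=
  delta_colon_eq_general δ hmono I hidem hJ a ha
end

section
/- Let R be a commutative ring with nonzero identity and δ an expansion function of the ideals of R. Let I and J be δ-J-ideals of R with δ(δ(I)) = δ(I) and δ(δ(J)) = δ(J), and let K be an ideal of R such that IK = JK and K is not contained in J(R). Then δ(I) = δ(J). -/
theorem IsDeltaJIdeal.le_of_mul_le {R : Type*} [CommRing R] {δ : Ideal R → Ideal R}
    {A B K : Ideal R} (hB : IsDeltaJIdeal δ B) (hK : ¬ K ≤ (⊥ : Ideal R).jacobson)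
    (hAK : A * K ≤ B) : A ≤ δ B := by
  obtain ⟨k, hkK, hk⟩ := SetLike.not_le_iff_exists.mp hK
  intro a ha
  have hka : k * a ∈ B := hAK (mul_comm a k ▸ Ideal.mul_mem_mul ha hkK)
  exact (hB.2 k a hka).resolve_left hk

theorem delta_eq_of_mul_eq_general {R : Type*} [CommRing R]
    (δ : Ideal R → Ideal R)
    (hmono : ∀ I' J' : Ideal R, I' ≤ J' → δ I' ≤ δ J')
    (I J K : Ideal R)
    (hI : IsDeltaJIdeal δ I) (hJ : IsDeltaJIdeal δ J)
    (hidemI : δ (δ I) = δ I) (hidemJ : δ (δ J) = δ J)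
    (hK : ¬ K ≤ (⊥ : Ideal R).jacobson)
    (heq : I * K = J * K) :
    δ I = δ J := by
  have hIJ : I ≤ δ J := hJ.le_of_mul_le hK (heq.le.trans Ideal.mul_le_left)
  have hJI : J ≤ δ I := hI.le_of_mul_le hK (heq.ge.trans Ideal.mul_le_left)
  exact le_antisymm (hidemJ ▸ hmono _ _ hIJ) (hidemI ▸ hmono _ _ hJI)

theorem delta_eq_of_mul_eq {R : Type*} [CommRing R] [Nontrivial R]
    (δ : Ideal R → Ideal R)
    (hexp : ∀ I' : Ideal R, I' ≤ δ I')
    (hmono : ∀ I' J' : Ideal R, I' ≤ J' → δ I' ≤ δ J')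
    (I J K : Ideal R)
    (hI : IsDeltaJIdeal δ I) (hJ : IsDeltaJIdeal δ J)
    (hidemI : δ (δ I) = δ I) (hidemJ : δ (δ J) = δ J)
    (hK : ¬ K ≤ (⊥ : Ideal R).jacobson)
    (heq : I * K = J * K) :
    δ I = δ J :=
  delta_eq_of_mul_eq_general δ hmono I J K hI hJ hidemI hidemJ hK heq
end

section
/- Let R be a commutative ring with nonzero identity and δ an expansion function of the ideals of R. Let I be an ideal of R and K an ideal of R not contained in J(R). If both IK and I are δ-J-ideals of R and δ(δ(IK)) = δ(IK), then δ(IK) = δ(I). -/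
theorem IsDeltaJIdeal.le_delta_of_mul_le {R : Type*} [CommRing R] {δ : Ideal R → Ideal R}
    {I K L : Ideal R} (hL : IsDeltaJIdeal δ L) (hK : ¬ K ≤ (⊥ : Ideal R).jacobson)
    (hIK : I * K ≤ L) : I ≤ δ L := by
  obtain ⟨k, hkK, hkJ⟩ := SetLike.not_le_iff_exists.mp hK
  intro a ha
  exact (hL.2 k a (hIK (mul_comm k a ▸ Ideal.mul_mem_mul ha hkK))).resolve_left hkJ

theorem delta_mul_eq_general {R : Type*} [CommRing R]
    (δ : Ideal R → Ideal R)
    (hmono : ∀ I' J' : Ideal R, I' ≤ J' → δ I' ≤ δ J')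
    (I K : Ideal R)
    (hK : ¬ K ≤ (⊥ : Ideal R).jacobson)
    (hIK : IsDeltaJIdeal δ (I * K))
    (hidem : δ (δ (I * K)) = δ (I * K)) :
    δ (I * K) = δ I := by
  refine le_antisymm (hmono _ _ Ideal.mul_le_left) ?_
  calc δ I ≤ δ (δ (I * K)) := hmono _ _ (hIK.le_delta_of_mul_le hK le_rfl)
    _ = δ (I * K) := hidem

theorem delta_mul_eq {R : Type*} [CommRing R] [Nontrivial R]
    (δ : Ideal R → Ideal R)
    (hexp : ∀ I' : Ideal R, I' ≤ δ I')
    (hmono : ∀ I' J' : Ideal R, I' ≤ J' → δ I' ≤ δ J')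
    (I K : Ideal R)
    (hK : ¬ K ≤ (⊥ : Ideal R).jacobson)
    (hIK : IsDeltaJIdeal δ (I * K)) (hI : IsDeltaJIdeal δ I)
    (hidem : δ (δ (I * K)) = δ (I * K)) :
    δ (I * K) = δ I :=
  delta_mul_eq_general δ hmono I K hK hIK hidem
end

section
/- Let R be a commutative ring with nonzero identity and I a proper ideal of R. If I is a δ₁-J-ideal of R, where δ₁ is the radical expansion δ₁(I) = √I, then √I is a J-ideal of R; that is, whenever a, b ∈ R with ab ∈ √I, either a ∈ J(R) or b ∈ √I. -/
namespace Ideal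

variable {R : Type*} [CommRing R]

theorem mem_or_mem_of_mul_mem_radical {I K L : Ideal R} (hK : K.IsRadical) (hL : L.IsRadical)
    (h : ∀ a b : R, a * b ∈ I → a ∈ K ∨ b ∈ L) {a b : R} (hab : a * b ∈ I.radical) :
    a ∈ K ∨ b ∈ L := by
  obtain ⟨n, hn⟩ := hab
  rw [mul_pow] at hn
  exact (h _ _ hn).imp (fun ha => hK ⟨n, ha⟩) (fun hb => hL ⟨n, hb⟩)

end Ideal

theorem radical_JIdeal_of_radicalJ_general {R : Type*} [CommRing R]
    (I : Ideal R) (hI : I ≠ ⊤)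
    (h : ∀ a b : R, a * b ∈ I → a ∈ (⊥ : Ideal R).jacobson ∨ b ∈ I.radical) :
    IsJIdeal I.radical :=
  ⟨mt Ideal.radical_eq_top.mp hI, fun _ _ =>
    Ideal.mem_or_mem_of_mul_mem_radical (Ideal.isRadical_jacobson ⊥) (Ideal.radical_isRadical I) h⟩

theorem radical_JIdeal_of_radicalJ {R : Type*} [CommRing R] [Nontrivial R]
    (I : Ideal R) (hI : I ≠ ⊤)
    (h : ∀ a b : R, a * b ∈ I → a ∈ (⊥ : Ideal R).jacobson ∨ b ∈ I.radical) :
    IsJIdeal I.radical :=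
  radical_JIdeal_of_radicalJ_general I hI h
end

section
/- Let R be a commutative ring with nonzero identity, δ an expansion function of the ideals of R, and let J, K, I be proper ideals of R with J ⊆ K ⊆ I. If I is a δ-J-ideal of R and δ(J) = δ(I), then K is a δ-J-ideal of R. -/
theorem IsDeltaJIdeal.of_le_of_delta_le {R : Type*} [CommRing R] {δ : Ideal R → Ideal R}
    {I K : Ideal R} (hI : IsDeltaJIdeal δ I) (hK : K ≠ ⊤) (hKI : K ≤ I) (hδ : δ I ≤ δ K) :
    IsDeltaJIdeal δ K :=
  ⟨hK, fun a b hab => (hI.2 a b (hKI hab)).imp id fun hb => hδ hb⟩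

theorem sandwich_deltaJ_general {R : Type*} [CommRing R]
    (δ : Ideal R → Ideal R)
    (hmono : ∀ I' J' : Ideal R, I' ≤ J' → δ I' ≤ δ J')
    (J K I : Ideal R) (hJK : J ≤ K) (hKI : K ≤ I)
    (hK : K ≠ ⊤)
    (hI : IsDeltaJIdeal δ I) (hδ : δ J = δ I) :
    IsDeltaJIdeal δ K :=
  hI.of_le_of_delta_le hK hKI (hδ.ge.trans (hmono J K hJK))

theorem sandwich_deltaJ {R : Type*} [CommRing R] [Nontrivial R]
    (δ : Ideal R → Ideal R)
    (hexp : ∀ I' : Ideal R, I' ≤ δ I')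
    (hmono : ∀ I' J' : Ideal R, I' ≤ J' → δ I' ≤ δ J')
    (J K I : Ideal R) (hJK : J ≤ K) (hKI : K ≤ I)
    (hJ : J ≠ ⊤) (hK : K ≠ ⊤)
    (hI : IsDeltaJIdeal δ I) (hδ : δ J = δ I) :
    IsDeltaJIdeal δ K :=
  sandwich_deltaJ_general δ hmono J K I hJK hKI hK hI hδ
end

section
/- Let R be a commutative ring with nonzero identity and δ an expansion function of the ideals of R that preserves intersections, i.e., δ(I ∩ J) = δ(I) ∩ δ(J) for all ideals I, J of R. If I₁, I₂, …, Iₙ (n ≥ 1) are δ-J-ideals of R, then their intersection I = ⋂_{i=1}^{n} Iᵢ is a δ-J-ideal of R. -/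
theorem apply_iInf_eq_iInf_apply_of_map_inf {α β ι : Type*} [CompleteLattice α]
    [CompleteLattice β] [Fintype ι] [Nonempty ι] (f : α → β)
    (hf : ∀ x y, f (x ⊓ y) = f x ⊓ f y) (g : ι → α) : f (⨅ i, g i) = ⨅ i, f (g i) := by
  simp only [← Finset.inf'_univ_eq_ciInf]
  exact Finset.apply_inf'_eq_inf'_comp _ f hf

theorem IsDeltaJIdeal.iInf {R ι : Type*} [CommRing R] [Fintype ι] [Nonempty ι]
    (δ : Ideal R → Ideal R) (hinter : ∀ I J : Ideal R, δ (I ⊓ J) = δ I ⊓ δ J)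
    {Is : ι → Ideal R} (h : ∀ i, IsDeltaJIdeal δ (Is i)) : IsDeltaJIdeal δ (⨅ i, Is i) := by
  obtain ⟨i₀⟩ := ‹Nonempty ι›
  refine ⟨ne_top_of_le_ne_top (h i₀).1 (iInf_le Is i₀), fun a b hab => ?_⟩
  refine or_iff_not_imp_left.mpr fun ha => ?_
  rw [apply_iInf_eq_iInf_apply_of_map_inf δ hinter, Submodule.mem_iInf]
  exact fun i => ((h i).2 a b (Submodule.mem_iInf _ |>.mp hab i)).resolve_left ha

theorem inter_deltaJ_general {R : Type*} [CommRing R]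
    (δ : Ideal R → Ideal R)
    (hinter : ∀ I J : Ideal R, δ (I ⊓ J) = δ I ⊓ δ J)
    (n : ℕ) (hn : 1 ≤ n) (Is : Fin n → Ideal R)
    (h : ∀ i, IsDeltaJIdeal δ (Is i)) :
    IsDeltaJIdeal δ (⨅ i, Is i) :=
  have : Nonempty (Fin n) := Fin.pos_iff_nonempty.mp hn
  IsDeltaJIdeal.iInf δ hinter h

theorem inter_deltaJ {R : Type*} [CommRing R] [Nontrivial R]
    (δ : Ideal R → Ideal R)
    (hexp : ∀ I : Ideal R, I ≤ δ I)
    (hmono : ∀ I J : Ideal R, I ≤ J → δ I ≤ δ J)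
    (hinter : ∀ I J : Ideal R, δ (I ⊓ J) = δ I ⊓ δ J)
    (n : ℕ) (hn : 1 ≤ n) (Is : Fin n → Ideal R)
    (h : ∀ i, IsDeltaJIdeal δ (Is i)) :
    IsDeltaJIdeal δ (⨅ i, Is i) :=
  inter_deltaJ_general δ hinter n hn Is h
end

section
/- Let R be a commutative ring with nonzero identity and δ an expansion function of the ideals of R that preserves intersections. Let I₁, I₂, …, Iₙ (n ≥ 2) be proper ideals of R such that each δ(Iₖ) is a prime ideal and, for all j ≠ k, Iⱼ is not contained in δ(Iₖ). If the intersection I = ⋂_{i=1}^{n} Iᵢ is a δ-J-ideal of R, then Iₖ is a δ-J-ideal of R for every k = 1, …, n. -/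
/-! Since `δ (I k)` is prime and contains none of the other `I j`, it does not contain their
intersection `K` either; pick `c ∈ K \ δ (I k)`. If `a * b ∈ I k` with `a ∉ J(R)`, then
`a * (b * c) ∈ ⋂ I`, so `b * c ∈ δ (⋂ I) ≤ δ (I k)`, and primality gives `b ∈ δ (I k)`. -/

theorem IsDeltaJIdeal.of_inf {R : Type*} [CommRing R] {δ : Ideal R → Ideal R}
    (hmono : ∀ I J : Ideal R, I ≤ J → δ I ≤ δ J) {I K : Ideal R} (hI : I ≠ ⊤)
    (hprime : (δ I).IsPrime) (hK : ¬ K ≤ δ I) (h : IsDeltaJIdeal δ (I ⊓ K)) :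
    IsDeltaJIdeal δ I := by
  refine ⟨hI, fun a b hab => (or_iff_not_imp_left).2 fun ha => ?_⟩
  obtain ⟨c, hcK, hc⟩ := SetLike.not_le_iff_exists.mp hK
  have habc : a * (b * c) ∈ I ⊓ K :=
    ⟨mul_assoc a b c ▸ I.mul_mem_right c hab, K.mul_mem_left _ (K.mul_mem_left b hcK)⟩
  have hbc : b * c ∈ δ I := hmono _ _ inf_le_left ((h.2 a _ habc).resolve_left ha)
  exact (hprime.mem_or_mem hbc).resolve_right hc

theorem Ideal.IsPrime.not_biInf_ne_le {R ι : Type*} [CommRing R] [Fintype ι] [DecidableEq ι]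
    {P : Ideal R} (hP : P.IsPrime) {f : ι → Ideal R} (k : ι)
    (hf : ∀ j, j ≠ k → ¬ f j ≤ P) : ¬ ⨅ (j) (_ : j ≠ k), f j ≤ P := by
  have : ⨅ (j) (_ : j ≠ k), f j = (Finset.univ.erase k).inf f := by simp [Finset.inf_eq_iInf]
  rw [this, hP.inf_le']
  rintro ⟨j, hj, hjP⟩
  exact hf j (Finset.ne_of_mem_erase hj) hjP

theorem components_deltaJ_of_inter_deltaJ_general {R : Type*} [CommRing R]
    (δ : Ideal R → Ideal R)
    (hmono : ∀ I J : Ideal R, I ≤ J → δ I ≤ δ J)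
    (n : ℕ) (Is : Fin n → Ideal R)
    (hproper : ∀ i, Is i ≠ ⊤)
    (hprime : ∀ i, (δ (Is i)).IsPrime)
    (hnoncomp : ∀ j k : Fin n, j ≠ k → ¬ Is j ≤ δ (Is k))
    (h : IsDeltaJIdeal δ (⨅ i, Is i)) :
    ∀ k, IsDeltaJIdeal δ (Is k) := by
  intro k
  rw [iInf_split_single Is k] at h
  exact h.of_inf hmono (hproper k) (hprime k)
    ((hprime k).not_biInf_ne_le k fun j hj => hnoncomp j k hj)

theorem components_deltaJ_of_inter_deltaJ {R : Type*} [CommRing R] [Nontrivial R]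
    (δ : Ideal R → Ideal R)
    (hexp : ∀ I : Ideal R, I ≤ δ I)
    (hmono : ∀ I J : Ideal R, I ≤ J → δ I ≤ δ J)
    (hinter : ∀ I J : Ideal R, δ (I ⊓ J) = δ I ⊓ δ J)
    (n : ℕ) (hn : 2 ≤ n) (Is : Fin n → Ideal R)
    (hproper : ∀ i, Is i ≠ ⊤)
    (hprime : ∀ i, (δ (Is i)).IsPrime)
    (hnoncomp : ∀ j k : Fin n, j ≠ k → ¬ Is j ≤ δ (Is k))
    (h : IsDeltaJIdeal δ (⨅ i, Is i)) :
    ∀ k, IsDeltaJIdeal δ (Is k) :=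
  components_deltaJ_of_inter_deltaJ_general δ hmono n Is hproper hprime hnoncomp h
end

section
/- Let R and S be commutative rings with nonzero identity, let δ and γ be expansion functions of the ideals of R and S respectively, and let f : R → S be a surjective ring homomorphism such that δ(f⁻¹(J)) = f⁻¹(γ(J)) for every ideal J of S (a δγ-homomorphism). If I is a δ-J-ideal of R with ker f ⊆ I, then the image f(I) is a γ-J-ideal of S. -/
/-! The contraction of `f(I)` is `I` itself, and surjectivity lets every product in `S` be pulled
back to a product in `R`; the Jacobson radical of `R` maps into that of `S`, and the
`δγ`-compatibility turns `δ I` into the contraction of `γ (f I)`. -/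

theorem Ideal.comap_map_eq_self_of_surjective_of_ker_le {R S : Type*} [CommRing R] [CommRing S]
    {f : R →+* S} (hf : Function.Surjective f) {I : Ideal R} (hker : RingHom.ker f ≤ I) :
    (I.map f).comap f = I := by
  rw [Ideal.comap_map_of_surjective' f hf, sup_eq_left.mpr hker]

theorem Ideal.map_mem_jacobson_bot_of_surjective {R S : Type*} [CommRing R] [CommRing S]
    {f : R →+* S} (hf : Function.Surjective f) {x : R} (hx : x ∈ (⊥ : Ideal R).jacobson) :
    f x ∈ (⊥ : Ideal S).jacobson := by
  rw [← Ideal.mem_comap, Ideal.comap_jacobson_of_surjective hf]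
  exact Ideal.jacobson_mono bot_le hx

theorem IsDeltaJIdeal.of_comap {R S : Type*} [CommRing R] [CommRing S]
    {δ : Ideal R → Ideal R} {γ : Ideal S → Ideal S} {f : R →+* S} (hf : Function.Surjective f)
    {J : Ideal S} (hδγ : δ (J.comap f) ≤ (γ J).comap f) (hJ : IsDeltaJIdeal δ (J.comap f)) :
    IsDeltaJIdeal γ J := by
  obtain ⟨hne_top, hmul⟩ := hJ
  refine ⟨fun htop => hne_top (by rw [htop, Ideal.comap_top]), fun a b hab => ?_⟩
  obtain ⟨x, rfl⟩ := hf a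
  obtain ⟨y, rfl⟩ := hf b
  have hxy : x * y ∈ J.comap f := by rwa [Ideal.mem_comap, map_mul]
  exact (hmul x y hxy).imp (Ideal.map_mem_jacobson_bot_of_surjective hf) (@hδγ y)

theorem image_deltaJ_general {R S : Type*} [CommRing R] [CommRing S]
    (δ : Ideal R → Ideal R) (γ : Ideal S → Ideal S)
    (f : R →+* S) (hf : Function.Surjective f)
    (hδγ : ∀ J : Ideal S, δ (J.comap f) = (γ J).comap f)
    (I : Ideal R) (hker : RingHom.ker f ≤ I)
    (hI : IsDeltaJIdeal δ I) :
    IsDeltaJIdeal γ (I.map f) := by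
  have hcomap : (I.map f).comap f = I := Ideal.comap_map_eq_self_of_surjective_of_ker_le hf hker
  refine IsDeltaJIdeal.of_comap hf (hδγ _).le ?_
  rwa [hcomap]

theorem image_deltaJ {R S : Type*} [CommRing R] [CommRing S] [Nontrivial R] [Nontrivial S]
    (δ : Ideal R → Ideal R) (γ : Ideal S → Ideal S)
    (hδexp : ∀ I : Ideal R, I ≤ δ I)
    (hδmono : ∀ I J : Ideal R, I ≤ J → δ I ≤ δ J)
    (hγexp : ∀ I : Ideal S, I ≤ γ I)
    (hγmono : ∀ I J : Ideal S, I ≤ J → γ I ≤ γ J)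
    (f : R →+* S) (hf : Function.Surjective f)
    (hδγ : ∀ J : Ideal S, δ (J.comap f) = (γ J).comap f)
    (I : Ideal R) (hker : RingHom.ker f ≤ I)
    (hI : IsDeltaJIdeal δ I) :
    IsDeltaJIdeal γ (I.map f) :=
  image_deltaJ_general δ γ f hf hδγ I hker hI
end

section
/- Let R be a commutative ring with nonzero identity, S a multiplicatively closed subset of R, and δ an expansion function of the ideals of R. Let δ_S be an expansion function of the ideals of the localization S⁻¹R satisfying δ_S(S⁻¹I) = S⁻¹(δ(I)) for every ideal I of R, and suppose J(S⁻¹R) = S⁻¹(J(R)). If I is a δ-J-ideal of R with I ∩ S = ∅, then S⁻¹I is a δ_S-J-ideal of S⁻¹R. -/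
namespace IsLocalization

theorem mem_map_or_mem_map_of_mul_mem_map {R : Type*} [CommSemiring R] (S : Submonoid R)
    {Rₛ : Type*} [CommSemiring Rₛ] [Algebra R Rₛ] [IsLocalization S Rₛ] {I A B : Ideal R}
    (h : ∀ a b : R, a * b ∈ I → a ∈ A ∨ b ∈ B) {x y : Rₛ}
    (hxy : x * y ∈ I.map (algebraMap R Rₛ)) :
    x ∈ A.map (algebraMap R Rₛ) ∨ y ∈ B.map (algebraMap R Rₛ) := by
  obtain ⟨⟨r, s⟩, rfl⟩ := mk'_surjective S x
  obtain ⟨⟨t, u⟩, rfl⟩ := mk'_surjective S y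
  rw [← mk'_mul, mk'_mem_map_algebraMap_iff S] at hxy
  obtain ⟨w, hwS, hwrt⟩ := hxy
  -- the denominator-clearing `w ∈ S` is absorbed into the first factor
  rw [← mul_assoc] at hwrt
  simp only [mk'_mem_map_algebraMap_iff S]
  exact (h (w * r) t hwrt).imp (fun hA ↦ ⟨w, hwS, hA⟩) fun hB ↦ ⟨1, one_mem S, by rwa [one_mul]⟩

end IsLocalization

theorem localization_deltaJ_general {R : Type*} [CommRing R]
    (S : Submonoid R) (Rₛ : Type*) [CommRing Rₛ] [Algebra R Rₛ] [IsLocalization S Rₛ]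
    (δ : Ideal R → Ideal R)
    (δS : Ideal Rₛ → Ideal Rₛ)
    (hcompat : ∀ I : Ideal R,
      δS (I.map (algebraMap R Rₛ)) = (δ I).map (algebraMap R Rₛ))
    (hJ : (⊥ : Ideal Rₛ).jacobson =
      ((⊥ : Ideal R).jacobson).map (algebraMap R Rₛ))
    (I : Ideal R) (hI : IsDeltaJIdeal δ I)
    (hdisj : Disjoint (I : Set R) (S : Set R)) :
    IsDeltaJIdeal δS (I.map (algebraMap R Rₛ)) := by
  refine ⟨(IsLocalization.map_algebraMap_ne_top_iff_disjoint S Rₛ I).2 hdisj.symm,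
    fun x y hxy ↦ ?_⟩
  rw [hJ, hcompat]
  exact IsLocalization.mem_map_or_mem_map_of_mul_mem_map S hI.2 hxy

theorem localization_deltaJ {R : Type*} [CommRing R] [Nontrivial R]
    (S : Submonoid R) (Rₛ : Type*) [CommRing Rₛ] [Algebra R Rₛ] [IsLocalization S Rₛ]
    (δ : Ideal R → Ideal R)
    (hδexp : ∀ I : Ideal R, I ≤ δ I)
    (hδmono : ∀ I J : Ideal R, I ≤ J → δ I ≤ δ J)
    (δS : Ideal Rₛ → Ideal Rₛ)
    (hδSexp : ∀ I : Ideal Rₛ, I ≤ δS I)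
    (hδSmono : ∀ I J : Ideal Rₛ, I ≤ J → δS I ≤ δS J)
    (hcompat : ∀ I : Ideal R,
      δS (I.map (algebraMap R Rₛ)) = (δ I).map (algebraMap R Rₛ))
    (hJ : (⊥ : Ideal Rₛ).jacobson =
      ((⊥ : Ideal R).jacobson).map (algebraMap R Rₛ))
    (I : Ideal R) (hI : IsDeltaJIdeal δ I)
    (hdisj : Disjoint (I : Set R) (S : Set R)) :
    IsDeltaJIdeal δS (I.map (algebraMap R Rₛ)) :=
  localization_deltaJ_general S Rₛ δ δS hcompat hJ I hI hdisj
end
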